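/- arXiv:1701.06070 — 2 statements merged into one kernel-verified Lean document; each statement's English description precedes it below -/
import Mathlib

section
/- Let Δ_k ⊂ U(p^k) act on C^{p^k} by the regular representation. If u ∈ U(p^k) satisfies u⁻¹Δ_k u ⊆ Σ_{p^k} (permutation matrices), then u⁻¹Δ_k u acts freely and transitively on the standard basis, and there exists σ ∈ Σ_{p^k} with σ⁻¹dσ = u⁻¹du for all d ∈ Δ_k; consequently u ∈ C_{U(p^k)}(Δ_k)·σ. -/
/-- The permutation matrix by which `d ∈ (ℤ/p)^k` acts in the regular representation of
`Δ_k = (ℤ/p)^k` on `ℂ^{p^k}` (basis indexed by the group itself). -/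
def transMat {p k : ℕ} (d : Fin k → ZMod p) :
    Matrix (Fin k → ZMod p) (Fin k → ZMod p) ℂ :=
  Matrix.of fun i j => if i = d + j then 1 else 0

/-!
The character of the regular representation vanishes off the identity and conjugation preserves
traces, so every `u⁻¹ d u` with `d ≠ 0` is a fixed-point-free permutation. Thus `u⁻¹ Δ_k u` acts
freely on a set with `|Δ_k|` points; the orbit map `τ` of any point is then a bijection
intertwining this action with the regular one, so `τ` induces the same conjugation as `u`, and
`u τ⁻¹` centralizes `Δ_k`.
-/

open Equiv Matrix

section Conjugation

variable {A : Type*} [Monoid A] [Star A] {u : A}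

lemma star_mul_mul_mul_star_mul_mul (hu : u * star u = 1) (a b : A) :
    star u * a * u * (star u * b * u) = star u * (a * b) * u := by
  simp only [mul_assoc]
  rw [← mul_assoc u, hu, one_mul]

lemma commute_mul_star_of_star_mul_mul_eq {P t : A} (hu : u * star u = 1) (hP : P * star P = 1)
    (h : star P * t * P = star u * t * u) : Commute (u * star P) t :=
  calc u * star P * t = u * (star P * t * P) * star P := by simp only [mul_assoc, hP, mul_one]
    _ = u * (star u * t * u) * star P := by rw [h]
    _ = t * (u * star P) := by simp only [← mul_assoc, hu, one_mul]

end Conjugation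

namespace Matrix

variable {n R : Type*} [DecidableEq n]

lemma permMatrix_injective [NonAssocSemiring R] [Nontrivial R] :
    Function.Injective fun σ : Perm n => σ.permMatrix R := by
  intro σ τ h
  ext x
  simpa [PEquiv.toMatrix_apply, toPEquiv_apply, eq_comm] using congr_fun (congr_fun h x) (σ x)

variable [Fintype n]

lemma trace_star_mul_mul [CommSemiring R] [StarRing R] {u : Matrix n n R} (hu : u * star u = 1)
    (a : Matrix n n R) : trace (star u * a * u) = trace a := by
  rw [trace_mul_cycle, hu, Matrix.one_mul]

lemma permMatrixHom_injective [NonAssocSemiring R] [Nontrivial R] :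
    Function.Injective (permMatrixHom : Perm n →* Matrix n n R) :=
  permMatrix_injective.comp inv_injective

lemma star_permMatrix [NonAssocSemiring R] [StarRing R] (τ : Perm n) :
    star (τ.permMatrix R) = permMatrixHom τ := by
  rw [star_eq_conjTranspose, conjTranspose_permMatrix, permMatrixHom_apply]

lemma permMatrixHom_mul_mul_inv [NonAssocSemiring R] [StarRing R] (τ π : Perm n) :
    permMatrixHom (τ * π * τ⁻¹) = star (τ.permMatrix R) * permMatrixHom π * τ.permMatrix R := by
  rw [map_mul, map_mul, star_permMatrix, permMatrixHom_apply τ⁻¹, inv_inv]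

lemma permMatrix_mem_unitaryGroup [CommRing R] [StarRing R] (τ : Perm n) :
    τ.permMatrix R ∈ unitaryGroup n R := by
  rw [mem_unitaryGroup_iff, star_permMatrix, ← inv_inv τ, ← permMatrixHom_apply, ← map_mul,
    mul_inv_cancel, map_one]

lemma apply_ne_self_of_trace_permMatrix_eq_zero [AddCommMonoidWithOne R] [CharZero R]
    {σ : Perm n} (h : trace (σ.permMatrix R) = 0) (i : n) : σ i ≠ i := by
  rw [trace_permutation, Nat.cast_eq_zero, Set.ncard_eq_zero] at h
  exact Set.eq_empty_iff_forall_notMem.mp h i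

end Matrix

section FreeAction

variable {G X : Type*} [AddGroup G] {ρ : G → Perm X}

lemma injective_apply_of_free (hρ : ∀ a b, ρ (a + b) = ρ a * ρ b)
    (hfree : ∀ d x, ρ d x = x → d = 0) (x : X) : Function.Injective (ρ · x) := by
  intro a b hab
  have : ρ (a - b) (ρ b x) = ρ b x := by
    rw [← Perm.mul_apply, ← hρ, sub_add_cancel]
    exact hab
  exact sub_eq_zero.mp (hfree _ _ this)

lemma bijective_apply_of_free [Finite X] (hρ : ∀ a b, ρ (a + b) = ρ a * ρ b)
    (hfree : ∀ d x, ρ d x = x → d = 0) (hcard : Nat.card X ≤ Nat.card G) (x : X) :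
    Function.Bijective (ρ · x) :=
  (injective_apply_of_free hρ hfree x).bijective_of_nat_card_le hcard

lemma exists_equiv_permCongr_addLeft_of_free [Finite X] (hρ : ∀ a b, ρ (a + b) = ρ a * ρ b)
    (hfree : ∀ d x, ρ d x = x → d = 0) (hcard : Nat.card X ≤ Nat.card G) (x : X) :
    ∃ τ : G ≃ X, ∀ d, ρ d = τ.permCongr (Equiv.addLeft d) := by
  let τ := Equiv.ofBijective _ (bijective_apply_of_free hρ hfree hcard x)
  refine ⟨τ, fun d => Equiv.ext fun y => ?_⟩
  obtain ⟨z, rfl⟩ := τ.surjective y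
  simp [τ, hρ]

end FreeAction

section RegularRepresentation

variable {p k : ℕ} [NeZero p]

lemma transMat_eq_permMatrixHom (d : Fin k → ZMod p) :
    transMat d = permMatrixHom (Equiv.addLeft d) := by
  ext i j
  simp [transMat, PEquiv.toMatrix_apply, neg_add_eq_iff_eq_add]

lemma transMat_add (a b : Fin k → ZMod p) : transMat (a + b) = transMat a * transMat b := by
  simp only [transMat_eq_permMatrixHom, ← map_mul, Equiv.addLeft_add]

lemma trace_transMat_of_ne_zero {d : Fin k → ZMod p} (hd : d ≠ 0) : trace (transMat d) = 0 := by
  simp [trace, transMat, hd]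

end RegularRepresentation

theorem conjugate_into_permutations_general {p k : ℕ} [Fact p.Prime]
    (u : Matrix (Fin k → ZMod p) (Fin k → ZMod p) ℂ)
    (hu : u ∈ Matrix.unitaryGroup (Fin k → ZMod p) ℂ)
    (hconj : ∀ d : Fin k → ZMod p, ∃ σ : Equiv.Perm (Fin k → ZMod p),
      star u * transMat d * u = σ.permMatrix ℂ) :
    -- the conjugated group acts freely on the standard basis
    (∀ d : Fin k → ZMod p, d ≠ 0 → ∀ σ : Equiv.Perm (Fin k → ZMod p),
      star u * transMat d * u = σ.permMatrix ℂ → ∀ i, σ i ≠ i) ∧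
    -- and transitively
    (∀ i j : Fin k → ZMod p, ∃ (d : Fin k → ZMod p) (σ : Equiv.Perm (Fin k → ZMod p)),
      star u * transMat d * u = σ.permMatrix ℂ ∧ σ i = j) ∧
    -- there is a permutation `τ` realizing the same conjugation, and `u = c · τ` with `c`
    -- centralizing `Δ_k`
    ∃ τ : Equiv.Perm (Fin k → ZMod p),
      (∀ d : Fin k → ZMod p,
        star (τ.permMatrix ℂ) * transMat d * τ.permMatrix ℂ = star u * transMat d * u) ∧
      ∃ c : Matrix (Fin k → ZMod p) (Fin k → ZMod p) ℂ,
        (∀ d : Fin k → ZMod p, c * transMat d = transMat d * c) ∧ u = c * τ.permMatrix ℂ := by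
  have hu' : u * star u = 1 := mem_unitaryGroup_iff.mp hu
  have hfree : ∀ d, d ≠ 0 → ∀ σ : Perm (Fin k → ZMod p),
      star u * transMat d * u = σ.permMatrix ℂ → ∀ i, σ i ≠ i := fun d hd σ hσ =>
    apply_ne_self_of_trace_permMatrix_eq_zero <| by
      rw [← hσ, trace_star_mul_mul hu', trace_transMat_of_ne_zero hd]
  choose σ hσ using hconj
  -- `permMatrix` reverses products, so it is `ρ d := (σ d)⁻¹` that is a homomorphism
  set ρ : (Fin k → ZMod p) → Perm (Fin k → ZMod p) := fun d => (σ d)⁻¹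
  have hρ : ∀ d, star u * transMat d * u = permMatrixHom (ρ d) := fun d => by
    rw [hσ, permMatrixHom_apply, inv_inv]
  have hρ_add : ∀ a b, ρ (a + b) = ρ a * ρ b := fun a b => permMatrixHom_injective (R := ℂ) <| by
    rw [map_mul, ← hρ, ← hρ, ← hρ, star_mul_mul_mul_star_mul_mul hu', transMat_add]
  have hρ_free : ∀ d x, ρ d x = x → d = 0 := fun d x hx => by
    by_contra hd
    exact hfree d hd (σ d) (hσ d) x (Perm.inv_eq_iff_eq.mp hx).symm
  obtain ⟨τ, hτ⟩ : ∃ τ : Perm (Fin k → ZMod p), _ :=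
    exists_equiv_permCongr_addLeft_of_free hρ_add hρ_free le_rfl 0
  have hτ_conj : ∀ d, star (τ.permMatrix ℂ) * transMat d * τ.permMatrix ℂ =
      star u * transMat d * u := fun d => by
    rw [hρ, hτ, permCongr_eq_mul, permMatrixHom_mul_mul_inv, transMat_eq_permMatrixHom]
  have hτ_unitary := permMatrix_mem_unitaryGroup (R := ℂ) τ
  refine ⟨hfree, fun i j => ?_, τ, hτ_conj, u * star (τ.permMatrix ℂ),
    fun d => commute_mul_star_of_star_mul_mul_eq hu' (Unitary.mul_star_self_of_mem hτ_unitary)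
      (hτ_conj d),
    by rw [mul_assoc, Unitary.star_mul_self_of_mem hτ_unitary, mul_one]⟩
  obtain ⟨d, hd⟩ := (bijective_apply_of_free hρ_add hρ_free le_rfl j).2 i
  exact ⟨d, σ d, hσ d, (Perm.inv_eq_iff_eq.mp hd).symm⟩

/-- If `u ∈ U(p^k)` conjugates `Δ_k` (acting by the regular representation) into the group of
permutation matrices, then `u⁻¹ Δ_k u` acts freely and transitively on the standard basis,
and there is a permutation `τ` inducing the same conjugation on `Δ_k`, so that
`u ∈ C_{U(p^k)}(Δ_k) · τ`. -/
theorem conjugate_into_permutations {p k : ℕ} [Fact p.Prime] (hk : 1 ≤ k)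
    (u : Matrix (Fin k → ZMod p) (Fin k → ZMod p) ℂ)
    (hu : u ∈ Matrix.unitaryGroup (Fin k → ZMod p) ℂ)
    (hconj : ∀ d : Fin k → ZMod p, ∃ σ : Equiv.Perm (Fin k → ZMod p),
      star u * transMat d * u = σ.permMatrix ℂ) :
    -- the conjugated group acts freely on the standard basis
    (∀ d : Fin k → ZMod p, d ≠ 0 → ∀ σ : Equiv.Perm (Fin k → ZMod p),
      star u * transMat d * u = σ.permMatrix ℂ → ∀ i, σ i ≠ i) ∧
    -- and transitively
    (∀ i j : Fin k → ZMod p, ∃ (d : Fin k → ZMod p) (σ : Equiv.Perm (Fin k → ZMod p)),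
      star u * transMat d * u = σ.permMatrix ℂ ∧ σ i = j) ∧
    -- there is a permutation `τ` realizing the same conjugation, and `u = c · τ` with `c`
    -- centralizing `Δ_k`
    ∃ τ : Equiv.Perm (Fin k → ZMod p),
      (∀ d : Fin k → ZMod p,
        star (τ.permMatrix ℂ) * transMat d * τ.permMatrix ℂ = star u * transMat d * u) ∧
      ∃ c : Matrix (Fin k → ZMod p) (Fin k → ZMod p) ℂ,
        (∀ d : Fin k → ZMod p, c * transMat d = transMat d * c) ∧ u = c * τ.permMatrix ℂ :=
  conjugate_into_permutations_general u hu hconj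
end

section
/- Let G be a finite group acting irreducibly and unitarily on V, λ a G-invariant orthogonal decomposition on which G acts transitively with stabilizer I of each component normal in G (uniform isotropy). Then the components of λ, viewed as representations of I, are pairwise non-isomorphic irreducible I-representations. -/
/-!
Irreducibility: if `U ≤ W` is `I`-stable and nonzero, the `G`-translates of `U` span `V` by
irreducibility; translates by `g ∉ I` lie in `gW ⊥ W`, so `W ≤ U ⊕ Wᗮ`, i.e. `U = W`.

Non-isomorphism (multiplicity one): averaging `φ ∘ P_W` over `G`, with `P_W` the orthogonal
projection onto `W`, gives a `G`-intertwiner, which is a scalar by Schur's lemma. On `W` only the terms with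
`g ∈ I` survive, each equal to `φ`, so `φ` is a scalar on `W` and cannot map `W` injectively onto
a component orthogonal to it.
-/

open scoped InnerProductSpace

namespace Representation

section Field

variable {k G V : Type*} [Field k] [Group G] [AddCommGroup V] [Module k V]
  (ρ : Representation k G V)

theorem isIrreducible_of_forall_map_le [Nontrivial V]
    (hirr : ∀ U : Submodule k V, (∀ g : G, U.map (ρ g) ≤ U) → U = ⊥ ∨ U = ⊤) :
    ρ.IsIrreducible where
  exists_pair_ne := ⟨⊥, ⊤, fun h => bot_ne_top (congrArg Subrepresentation.toSubmodule h)⟩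
  eq_bot_or_eq_top σ := by
    have hσ : ∀ g : G, σ.toSubmodule.map (ρ g) ≤ σ.toSubmodule := by
      rintro g _ ⟨v, hv, rfl⟩
      exact σ.apply_mem_toSubmodule g hv
    rcases hirr σ.toSubmodule hσ with h | h
    · exact Or.inl (Subrepresentation.toSubmodule_injective h)
    · exact Or.inr (Subrepresentation.toSubmodule_injective h)

theorem IsIrreducible.exists_eq_smul_of_isIntertwiningMap [ρ.IsIrreducible]
    [FiniteDimensional k V] [IsAlgClosed k] {f : V →ₗ[k] V} (hf : ρ.IsIntertwiningMap ρ f) :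
    ∃ c : k, ∀ v, f v = c • v := by
  obtain ⟨c, hc⟩ := IsIrreducible.algebraMap_intertwiningMap_bijective_of_isAlgClosed.2
    (f.intertwiningMap_of_isIntertwiningMap ρ ρ hf.isIntertwining)
  exact ⟨c, fun v => (congrArg (· v) hc).symm⟩

theorem isIntertwiningMap_sum_conj [Fintype G] (ψ : V →ₗ[k] V) :
    ρ.IsIntertwiningMap ρ (∑ g : G, ρ g ∘ₗ ψ ∘ₗ ρ g⁻¹) := by
  rw [← mem_linHom_invariants_iff_isIntertwining]
  intro h
  simp only [← linHom_apply, map_sum, ← Module.End.mul_apply, ← map_mul]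
  exact Fintype.sum_equiv (Equiv.mulLeft h) _ _ fun g => rfl

theorem iSup_map_eq_top_of_ne_bot
    (hirr : ∀ U : Submodule k V, (∀ g : G, U.map (ρ g) ≤ U) → U = ⊥ ∨ U = ⊤)
    {U : Submodule k V} (hU : U ≠ ⊥) : ⨆ g : G, U.map (ρ g) = ⊤ := by
  refine (hirr _ fun h => ?_).resolve_left fun h => hU (eq_bot_iff.2 ?_)
  · rw [Submodule.map_iSup]
    refine iSup_le fun g => ?_
    rw [← Submodule.map_comp, ← Module.End.mul_eq_comp, ← map_mul]
    exact le_iSup (fun g => U.map (ρ g)) (h * g)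
  · simpa [h, Module.End.one_eq_id] using le_iSup (fun g => U.map (ρ g)) 1

end Field

section InnerProduct

variable {𝕜 G V : Type*} [RCLike 𝕜] [Group G] [NormedAddCommGroup V] [InnerProductSpace 𝕜 V]
  (ρ : Representation 𝕜 G V) {I : Subgroup G} {W : Submodule 𝕜 V}

theorem eq_bot_or_eq_of_le_of_forall_map_le
    (hirr : ∀ U : Submodule 𝕜 V, (∀ g : G, U.map (ρ g) ≤ U) → U = ⊥ ∨ U = ⊤)
    (hortho : ∀ g ∉ I, W ⟂ W.map (ρ g))
    {U : Submodule 𝕜 V} (hUW : U ≤ W) (hU : ∀ g : I, U.map (ρ g) ≤ U) : U = ⊥ ∨ U = W := by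
  refine or_iff_not_imp_left.2 fun hU0 => ?_
  have hspan : ⨆ g : G, U.map (ρ g) ≤ U ⊔ Wᗮ := iSup_le fun g => by
    by_cases hg : g ∈ I
    · exact le_sup_of_le_left (hU ⟨g, hg⟩)
    · exact le_sup_of_le_right ((Submodule.map_mono hUW).trans (hortho g hg).symm.le)
  rw [iSup_map_eq_top_of_ne_bot ρ hirr hU0, top_le_iff] at hspan
  calc U = U ⊔ Wᗮ ⊓ W := by rw [inf_comm, Submodule.inf_orthogonal_eq_bot, sup_bot_eq]
    _ = (U ⊔ Wᗮ) ⊓ W := (sup_inf_assoc_of_le _ hUW).symm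
    _ = W := by rw [hspan, top_inf_eq]

theorem conj_starProjection_apply [W.HasOrthogonalProjection] [DecidablePred (· ∈ I)]
    (hstab : ∀ g ∈ I, W.map (ρ g) ≤ W) (hortho : ∀ g ∉ I, W ⟂ W.map (ρ g))
    {φ : V →ₗ[𝕜] V} (hφ : ∀ g : I, ∀ x ∈ W, φ (ρ g x) = ρ g (φ x)) (g : G) {w : V}
    (hw : w ∈ W) : ρ g (φ (W.starProjection (ρ g⁻¹ w))) = if g ∈ I then φ w else 0 := by
  have hgw : ρ g⁻¹ w ∈ W.map (ρ g⁻¹) := Submodule.mem_map_of_mem hw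
  split_ifs with hg
  · have hg' : g⁻¹ ∈ I := inv_mem hg
    rw [W.starProjection_eq_self_iff.2 (hstab _ hg' hgw), hφ ⟨g⁻¹, hg'⟩ w hw]
    exact self_inv_apply ρ g (φ w)
  · have hg' : g⁻¹ ∉ I := fun h => hg (inv_inv g ▸ inv_mem h)
    rw [W.starProjection_apply_eq_zero_iff.2 ((hortho _ hg').symm.le hgw), map_zero, map_zero]

end InnerProduct

section Complex

variable {G V : Type*} [Group G] [NormedAddCommGroup V] [InnerProductSpace ℂ V]
  [FiniteDimensional ℂ V] (ρ : Representation ℂ G V) {I : Subgroup G} {W : Submodule ℂ V}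

theorem exists_eq_smul_of_isIntertwining_on [Finite G] [ρ.IsIrreducible]
    (hstab : ∀ g ∈ I, W.map (ρ g) ≤ W) (hortho : ∀ g ∉ I, W ⟂ W.map (ρ g))
    {φ : V →ₗ[ℂ] V} (hφ : ∀ g : I, ∀ x ∈ W, φ (ρ g x) = ρ g (φ x)) :
    ∃ c : ℂ, ∀ w ∈ W, φ w = c • w := by
  classical
  have := Fintype.ofFinite G
  obtain ⟨c, hc⟩ := IsIrreducible.exists_eq_smul_of_isIntertwiningMap ρ
    (isIntertwiningMap_sum_conj ρ (φ ∘ₗ W.starProjection.toLinearMap))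
  set n := (Finset.univ.filter (· ∈ I)).card
  have hn : (n : ℂ) ≠ 0 := Nat.cast_ne_zero.2 (Finset.card_ne_zero.2 ⟨1, by simp [I.one_mem]⟩)
  refine ⟨c / n, fun w hw => ?_⟩
  have hsum : (n : ℂ) • φ w = c • w := by
    rw [← hc, LinearMap.sum_apply]
    simp only [LinearMap.comp_apply, ContinuousLinearMap.coe_coe,
      conj_starProjection_apply ρ hstab hortho hφ _ hw]
    rw [Finset.sum_ite, Finset.sum_const, Finset.sum_const_zero, add_zero, Nat.cast_smul_eq_nsmul]
  rw [div_eq_inv_mul, mul_smul, ← hsum, smul_smul, inv_mul_cancel₀ hn, one_smul]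

end Complex

end Representation

theorem components_irreducible_pairwise_nonisomorphic_general {G : Type*} [Group G] [Finite G]
    {V : Type*} [NormedAddCommGroup V] [InnerProductSpace ℂ V] [FiniteDimensional ℂ V]
    [Nontrivial V]
    (ρ : Representation ℂ G V)
    (hirr : ∀ U : Submodule ℂ V, (∀ g : G, U.map (ρ g) ≤ U) → U = ⊥ ∨ U = ⊤)
    (D : Set (Submodule ℂ V))
    (hnonzero : ∀ W ∈ D, W ≠ ⊥)
    (horth : ∀ W₁ ∈ D, ∀ W₂ ∈ D, W₁ ≠ W₂ → ∀ x ∈ W₁, ∀ y ∈ W₂, ⟪x, y⟫_ℂ = 0)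
    (hinv : ∀ (g : G), ∀ W ∈ D, W.map (ρ g) ∈ D)
    (I : Subgroup G)
    (hI : ∀ W ∈ D, ∀ g : G, g ∈ I ↔ W.map (ρ g) = W) :
    -- each component is an irreducible `I`-representation
    (∀ W ∈ D, ∀ U : Submodule ℂ V, U ≤ W → (∀ g : I, U.map (ρ (g : G)) ≤ U) →
      U = ⊥ ∨ U = W) ∧
    -- distinct components are non-isomorphic as `I`-representations: there is no linear map
    -- that is `I`-equivariant on `W₁` and restricts to an injection of `W₁` onto `W₂`
    (∀ W₁ ∈ D, ∀ W₂ ∈ D, W₁ ≠ W₂ →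
      ¬∃ φ : V →ₗ[ℂ] V,
        (∀ g : I, ∀ x ∈ W₁, φ (ρ (g : G) x) = ρ (g : G) (φ x)) ∧
        W₁.map φ = W₂ ∧
        (∀ x ∈ W₁, φ x = 0 → x = 0)) := by
  have hortho : ∀ W ∈ D, ∀ W' ∈ D, W ≠ W' → W ⟂ W' := fun W hW W' hW' hne =>
    Submodule.isOrtho_iff_inner_eq.2 (horth W hW W' hW' hne)
  have hstab : ∀ W ∈ D, ∀ g ∈ I, W.map (ρ g) ≤ W := fun W hW g hg => ((hI W hW g).1 hg).le
  have hmoved : ∀ W ∈ D, ∀ g ∉ I, W ⟂ W.map (ρ g) := fun W hW g hg =>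
    hortho W hW _ (hinv g W hW) fun h => hg ((hI W hW g).2 h.symm)
  refine ⟨fun W hW U hUW hU =>
    Representation.eq_bot_or_eq_of_le_of_forall_map_le ρ hirr (hmoved W hW) hUW hU, ?_⟩
  rintro W₁ hW₁ W₂ hW₂ hne ⟨φ, hφ, hφW, hφinj⟩
  have := Representation.isIrreducible_of_forall_map_le ρ hirr
  obtain ⟨c, hc⟩ :=
    Representation.exists_eq_smul_of_isIntertwining_on ρ (hstab W₁ hW₁) (hmoved W₁ hW₁) hφ
  refine hnonzero W₁ hW₁ (eq_bot_iff.2 fun w hw => ?_)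
  have hφw : φ w ∈ W₁ ⊓ W₂ := ⟨hc w hw ▸ W₁.smul_mem c hw, hφW ▸ Submodule.mem_map_of_mem hw⟩
  rw [(hortho W₁ hW₁ W₂ hW₂ hne).disjoint.eq_bot, Submodule.mem_bot] at hφw
  exact (Submodule.mem_bot ℂ).2 (hφinj w hw hφw)

/-- Let `G` be a finite group acting irreducibly and unitarily on `V`, and `D` a `G`-invariant
orthogonal decomposition on which `G` acts transitively with the stabilizer `I` of every
component normal in `G` (uniform isotropy).  Then the components of `D`, viewed as
representations of `I`, are pairwise non-isomorphic irreducible `I`-representations. -/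
theorem components_irreducible_pairwise_nonisomorphic {G : Type*} [Group G] [Finite G]
    {V : Type*} [NormedAddCommGroup V] [InnerProductSpace ℂ V] [FiniteDimensional ℂ V]
    [Nontrivial V]
    (ρ : Representation ℂ G V)
    (hunitary : ∀ (g : G) (v w : V), ⟪ρ g v, ρ g w⟫_ℂ = ⟪v, w⟫_ℂ)
    (hirr : ∀ U : Submodule ℂ V, (∀ g : G, U.map (ρ g) ≤ U) → U = ⊥ ∨ U = ⊤)
    (D : Set (Submodule ℂ V))
    (hnonzero : ∀ W ∈ D, W ≠ ⊥)
    (horth : ∀ W₁ ∈ D, ∀ W₂ ∈ D, W₁ ≠ W₂ → ∀ x ∈ W₁, ∀ y ∈ W₂, ⟪x, y⟫_ℂ = 0)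
    (hsum : sSup D = ⊤)
    (hinv : ∀ (g : G), ∀ W ∈ D, W.map (ρ g) ∈ D)
    (htrans : ∀ W₁ ∈ D, ∀ W₂ ∈ D, ∃ g : G, W₁.map (ρ g) = W₂)
    (I : Subgroup G) [I.Normal]
    (hI : ∀ W ∈ D, ∀ g : G, g ∈ I ↔ W.map (ρ g) = W) :
    -- each component is an irreducible `I`-representation
    (∀ W ∈ D, ∀ U : Submodule ℂ V, U ≤ W → (∀ g : I, U.map (ρ (g : G)) ≤ U) →
      U = ⊥ ∨ U = W) ∧
    -- distinct components are non-isomorphic as `I`-representations: there is no linear map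
    -- that is `I`-equivariant on `W₁` and restricts to an injection of `W₁` onto `W₂`
    (∀ W₁ ∈ D, ∀ W₂ ∈ D, W₁ ≠ W₂ →
      ¬∃ φ : V →ₗ[ℂ] V,
        (∀ g : I, ∀ x ∈ W₁, φ (ρ (g : G) x) = ρ (g : G) (φ x)) ∧
        W₁.map φ = W₂ ∧
        (∀ x ∈ W₁, φ x = 0 → x = 0)) :=
  components_irreducible_pairwise_nonisomorphic_general ρ hirr D hnonzero horth hinv I hI
end
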